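/- arXiv:2102.02410 — 2 statements merged into one kernel-verified Lean document; each statement's English description precedes it below -/
import Mathlib

section
/- Suppose the teacher neurons w_1*, …, w_r* ∈ ℝ^d are nonzero, Δ-separated for some Δ > 0, and the population loss satisfies L(W) = 0 for student weights W = (w_1, …, w_m). Then every nonzero student neuron matches a teacher neuron in direction: for each j ∈ [m] with w_j ≠ 0 there exists i ∈ [r] such that ∠(w_j, w_i*) = 0, i.e. w_j is a (possibly negative) scalar multiple of w_i*. -/
/-!
Zero loss forces `f_W = f*` everywhere, since both networks are continuous and the Gaussian
charges every nonempty open set. Now look at second differences `g (x + h) + g (x - h) - 2 g x`: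
for `g = |⟨v, ·⟩|` this equals `2 (max |⟨v, x⟩| |⟨v, h⟩| - |⟨v, x⟩|)`, so it is nonnegative,
vanishes when `|⟨v, h⟩| ≤ |⟨v, x⟩|`, and is `2 |⟨v, h⟩|` when `⟨v, x⟩ = 0`. If a nonzero student
neuron `w` were parallel to no teacher neuron, choose `x ⊥ w` off every teacher hyperplane
`⟨w_i*, x⟩ = 0` and `h = t w` with `t > 0` small: the second difference of `f*` at `x` vanishes,
while that of `f_W` is at least `2 t ‖w‖³ > 0`.
-/

open MeasureTheory ProbabilityTheory Finset
open scoped Classical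

noncomputable section

/-- Standard Gaussian measure `N(0, I_d)` on `ℝ^d`. -/
def stdG (d : ℕ) : Measure (Fin d → ℝ) := Measure.pi fun _ => gaussianReal 0 1

instance (d : ℕ) : IsProbabilityMeasure (stdG d) := by
  unfold stdG; infer_instance

/-- Euclidean inner product on `ℝ^d`. -/
def dotp {d : ℕ} (w x : Fin d → ℝ) : ℝ := ∑ i, w i * x i

/-- Euclidean norm on `ℝ^d`. -/
def nrm {d : ℕ} (w : Fin d → ℝ) : ℝ := Real.sqrt (dotp w w)

/-- The angle (up to sign) between two vectors:
`∠(w,v) = arccos(|⟨w,v⟩| / (‖w‖‖v‖)) ∈ [0, π/2]`. -/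
def ang {d : ℕ} (w v : Fin d → ℝ) : ℝ := Real.arccos (|dotp w v| / (nrm w * nrm v))

/-- The teacher network `f*(x) = ∑ᵢ |⟨wᵢ*, x⟩|`. -/
def fStar {d r : ℕ} (ws : Fin r → Fin d → ℝ) (x : Fin d → ℝ) : ℝ := ∑ i, |dotp (ws i) x|

/-- The student network `f_W(x) = ∑ⱼ ‖wⱼ‖ |⟨wⱼ, x⟩|`. -/
def fStu {d m : ℕ} (W : Fin m → Fin d → ℝ) (x : Fin d → ℝ) : ℝ :=
  ∑ j, nrm (W j) * |dotp (W j) x|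

/-- The population square loss `L(W) = (1/2) E_x[(f_W(x) - f*(x))²]`. -/
def loss {d r m : ℕ} (ws : Fin r → Fin d → ℝ) (W : Fin m → Fin d → ℝ) : ℝ :=
  (1 / 2) * ∫ x, (fStu W x - fStar ws x) ^ 2 ∂(stdG d)

/-- The gradient `∇_{w_j} L(W) = E_x[R(x) ‖w_j‖ (I + w̄_j w̄_jᵀ) x · sgn(⟨w_j, x⟩)]`
(defined to be `0` when `w_j = 0`). -/
def gradL {d r m : ℕ} (ws : Fin r → Fin d → ℝ) (W : Fin m → Fin d → ℝ) (j : Fin m) :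
    Fin d → ℝ :=
  if W j = 0 then 0 else fun k =>
    ∫ x, (fStu W x - fStar ws x) * nrm (W j) *
      (x k + (W j k / nrm (W j)) * (dotp (W j) x / nrm (W j))) * Real.sign (dotp (W j) x)
      ∂(stdG d)

open Filter Topology Matrix

lemma dotp_eq_dotProduct {d : ℕ} (w x : Fin d → ℝ) : dotp w x = w ⬝ᵥ x := rfl

lemma dotp_self_nonneg {d : ℕ} (w : Fin d → ℝ) : 0 ≤ dotp w w :=
  dotProduct_self_star_nonneg w

lemma dotp_self_pos {d : ℕ} {w : Fin d → ℝ} (hw : w ≠ 0) : 0 < dotp w w :=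
  dotProduct_self_star_pos_iff.2 hw

lemma nrm_mul_self {d : ℕ} (w : Fin d → ℝ) : nrm w * nrm w = dotp w w :=
  Real.mul_self_sqrt (dotp_self_nonneg w)

lemma nrm_smul {d : ℕ} (c : ℝ) (w : Fin d → ℝ) : nrm (c • w) = |c| * nrm w := by
  rw [nrm, dotp_eq_dotProduct, smul_dotProduct, dotProduct_smul, smul_eq_mul, smul_eq_mul,
    ← mul_assoc, ← dotp_eq_dotProduct, Real.sqrt_mul (mul_self_nonneg c),
    Real.sqrt_mul_self_eq_abs, nrm]

lemma nrm_pos {d : ℕ} {w : Fin d → ℝ} (hw : w ≠ 0) : 0 < nrm w :=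
  Real.sqrt_pos.2 (dotp_self_pos hw)

lemma ang_smul_left_eq_zero {d : ℕ} {c : ℝ} {u : Fin d → ℝ} (h : c • u ≠ 0) :
    ang (c • u) u = 0 := by
  obtain ⟨hc, hu⟩ := smul_ne_zero_iff.1 h
  have hnu := nrm_pos hu
  rw [ang, nrm_smul, dotp_eq_dotProduct, smul_dotProduct, smul_eq_mul, ← dotp_eq_dotProduct,
    ← nrm_mul_self, abs_mul, abs_mul_self, mul_assoc, div_self (by positivity), Real.arccos_one]

section PointwiseEquality

instance : (gaussianReal 0 1).IsOpenPosMeasure :=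
  (gaussianReal_absolutelyContinuous' 0 one_ne_zero).isOpenPosMeasure

instance (d : ℕ) : (stdG d).IsOpenPosMeasure := by
  unfold stdG; infer_instance

lemma continuous_dotp {d : ℕ} (v : Fin d → ℝ) : Continuous (dotp v) := by
  unfold dotp; fun_prop

lemma memLp_dotp {d : ℕ} (v : Fin d → ℝ) : MemLp (dotp v) 2 (stdG d) := by
  have coord (i : Fin d) : MemLp (fun x : Fin d → ℝ => x i) 2 (stdG d) :=
    (memLp_id_gaussianReal' 2 (by norm_num)).comp_measurePreserving (measurePreserving_eval _ i)
  unfold dotp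
  exact memLp_finsetSum _ fun i _ => (coord i).const_mul (v i)

variable {d r m : ℕ} (ws : Fin r → Fin d → ℝ) (W : Fin m → Fin d → ℝ)

lemma continuous_fStu : Continuous (fStu W) := by
  unfold fStu
  exact continuous_finsetSum _ fun j _ => continuous_const.mul (continuous_dotp (W j)).abs

lemma continuous_fStar : Continuous (fStar ws) := by
  unfold fStar
  exact continuous_finsetSum _ fun i _ => (continuous_dotp (ws i)).abs

lemma memLp_fStu : MemLp (fStu W) 2 (stdG d) := by
  unfold fStu
  exact memLp_finsetSum _ fun j _ => (memLp_dotp (W j)).abs.const_mul (nrm (W j))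

lemma memLp_fStar : MemLp (fStar ws) 2 (stdG d) := by
  unfold fStar
  exact memLp_finsetSum _ fun i _ => (memLp_dotp (ws i)).abs

theorem fStu_eq_fStar_of_loss_eq_zero (h : loss ws W = 0) : fStu W = fStar ws := by
  have hint : Integrable (fun x => (fStu W x - fStar ws x) ^ 2) (stdG d) :=
    ((memLp_fStu W).sub (memLp_fStar ws)).integrable_sq
  have hzero : (fun x => (fStu W x - fStar ws x) ^ 2) =ᵐ[stdG d] 0 :=
    (integral_eq_zero_iff_of_nonneg (fun x => sq_nonneg _) hint).1 (by simpa [loss] using h)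
  have hcont : Continuous fun x => (fStu W x - fStar ws x) ^ 2 :=
    ((continuous_fStu W).sub (continuous_fStar ws)).pow 2
  funext x
  simpa [sub_eq_zero] using congrFun ((hcont.ae_eq_iff_eq _ continuous_zero).1 hzero) x

end PointwiseEquality

section SecondDifference

def secondDiff {E : Type*} [AddCommGroup E] (f : E → ℝ) (x h : E) : ℝ :=
  f (x + h) + f (x - h) - 2 * f x

variable {E ι : Type*} [AddCommGroup E]

lemma secondDiff_finsetSum (s : Finset ι) (f : ι → E → ℝ) (x h : E) :
    secondDiff (fun y => ∑ i ∈ s, f i y) x h = ∑ i ∈ s, secondDiff (f i) x h := by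
  simp only [secondDiff, Finset.sum_sub_distrib, Finset.sum_add_distrib, Finset.mul_sum]

lemma secondDiff_const_mul (c : ℝ) (f : E → ℝ) (x h : E) :
    secondDiff (fun y => c * f y) x h = c * secondDiff f x h := by
  simp only [secondDiff]; ring

lemma abs_add_add_abs_sub (a b : ℝ) : |a + b| + |a - b| = 2 * max |a| |b| := by
  simp only [abs_eq_max_neg, max_def]; split_ifs <;> linarith

lemma secondDiff_abs_dotp {d : ℕ} (v x h : Fin d → ℝ) :
    secondDiff (fun y => |dotp v y|) x h = 2 * (max |dotp v x| |dotp v h| - |dotp v x|) := by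
  simp only [secondDiff, dotp_eq_dotProduct, dotProduct_add, dotProduct_sub,
    abs_add_add_abs_sub]
  ring

variable {d r m : ℕ} (ws : Fin r → Fin d → ℝ) (W : Fin m → Fin d → ℝ)

lemma secondDiff_fStar_eq_zero {x h : Fin d → ℝ}
    (hsmall : ∀ i, |dotp (ws i) h| ≤ |dotp (ws i) x|) :
    secondDiff (fStar ws) x h = 0 := by
  unfold fStar
  simp only [secondDiff_finsetSum, secondDiff_abs_dotp, max_eq_left (hsmall _), sub_self,
    mul_zero, Finset.sum_const_zero]

lemma secondDiff_fStu_pos {x h : Fin d → ℝ} {j : Fin m} (hx : dotp (W j) x = 0)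
    (hh : dotp (W j) h ≠ 0) : 0 < secondDiff (fStu W) x h := by
  have hWj : W j ≠ 0 := by rintro hW; simp [hW, dotp_eq_dotProduct] at hh
  have hterm (k : Fin m) : 0 ≤ nrm (W k) * secondDiff (fun y => |dotp (W k) y|) x h := by
    rw [secondDiff_abs_dotp]
    exact mul_nonneg (Real.sqrt_nonneg _) (by linarith [le_max_left |dotp (W k) x| |dotp (W k) h|])
  have hj : 0 < nrm (W j) * secondDiff (fun y => |dotp (W j) y|) x h := by
    rw [secondDiff_abs_dotp, hx, abs_zero, max_eq_right (abs_nonneg _)]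
    have := nrm_pos hWj
    have := abs_pos.2 hh
    positivity
  unfold fStu
  simp only [secondDiff_finsetSum, secondDiff_const_mul]
  exact hj.trans_le (Finset.single_le_sum (fun k _ => hterm k) (Finset.mem_univ j))

end SecondDifference

section GenericDirection

variable {K n : Type*} [Field K] [LinearOrder K] [IsStrictOrderedRing K] [Fintype n]

lemma exists_dotProduct_eq_zero_and_ne_zero {v w : n → K} (hv : ∀ c : K, v ≠ c • w) :
    ∃ x, w ⬝ᵥ x = 0 ∧ v ⬝ᵥ x ≠ 0 := by
  set c := w ⬝ᵥ v / w ⬝ᵥ w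
  have hc : c * w ⬝ᵥ w = w ⬝ᵥ v :=
    div_mul_cancel_of_imp fun h => by rw [dotProduct_self_eq_zero.1 h, zero_dotProduct]
  have hperp : w ⬝ᵥ (v - c • w) = 0 := by
    rw [dotProduct_sub, dotProduct_smul, smul_eq_mul, dotProduct_comm w w, hc, sub_self]
  refine ⟨v - c • w, hperp, ?_⟩
  have hx : v - c • w ≠ 0 := sub_ne_zero.2 (hv c)
  calc v ⬝ᵥ (v - c • w) = (v - c • w) ⬝ᵥ (v - c • w) := by
        rw [sub_dotProduct, smul_dotProduct, hperp, smul_zero, sub_zero]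
    _ ≠ 0 := fun h => hx (dotProduct_self_eq_zero.1 h)

theorem exists_dotProduct_eq_zero_forall_ne_zero {ι : Type*} [Finite ι] {w : n → K}
    (v : ι → n → K) (hv : ∀ i (c : K), v i ≠ c • w) :
    ∃ x, w ⬝ᵥ x = 0 ∧ ∀ i, v i ⬝ᵥ x ≠ 0 := by
  obtain ⟨x, hx, hne⟩ := Module.Dual.exists_forall_mem_ne_zero_of_forall_exists
    (LinearMap.ker (dotProductEquiv K n w)) (fun i => dotProductEquiv K n (v i)) fun i => by
      simpa using exists_dotProduct_eq_zero_and_ne_zero (hv i)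
  exact ⟨x, by simpa using hx, by simpa using hne⟩

end GenericDirection

lemma exists_pos_forall_abs_mul_le {ι : Type*} [Finite ι] {a : ι → ℝ} (b : ι → ℝ)
    (ha : ∀ i, a i ≠ 0) : ∃ t > 0, ∀ i, |t * b i| ≤ |a i| := by
  have hnear : ∀ᶠ t in 𝓝 (0 : ℝ), ∀ i, |t * b i| ≤ |a i| := eventually_all.2 fun i =>
    ((continuous_id.mul continuous_const).abs.tendsto' 0 0 (by simp)).eventually
      (ge_mem_nhds (abs_pos.2 (ha i)))
  have hpos : ∀ᶠ t in 𝓝[>] (0 : ℝ), 0 < t := self_mem_nhdsWithin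
  obtain ⟨t, hsmall, ht⟩ := ((hnear.filter_mono nhdsWithin_le_nhds).and hpos).exists
  exact ⟨t, ht, hsmall⟩

theorem exists_eq_smul_of_fStu_eq_fStar {d r m : ℕ} {ws : Fin r → Fin d → ℝ}
    {W : Fin m → Fin d → ℝ} (hne : ∀ i, ws i ≠ 0) (h : fStu W = fStar ws) {j : Fin m}
    (hj : W j ≠ 0) : ∃ i, ∃ c : ℝ, W j = c • ws i := by
  by_contra! hpar
  have hteacher (i : Fin r) (c : ℝ) : ws i ≠ c • W j := by
    intro hc
    have hc0 : c ≠ 0 := by rintro rfl; exact hne i (by simpa using hc)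
    exact hpar i c⁻¹ ((eq_inv_smul_iff₀ hc0).2 hc.symm)
  obtain ⟨x, hx, hgen⟩ := exists_dotProduct_eq_zero_forall_ne_zero ws hteacher
  obtain ⟨t, ht, hsmall⟩ := exists_pos_forall_abs_mul_le (fun i => dotp (ws i) (W j)) hgen
  have hstar : secondDiff (fStar ws) x (t • W j) = 0 :=
    secondDiff_fStar_eq_zero ws fun i => by
      simpa [dotp_eq_dotProduct, dotProduct_smul] using hsmall i
  have hstu : 0 < secondDiff (fStu W) x (t • W j) := by
    refine secondDiff_fStu_pos W hx ?_
    rw [dotp_eq_dotProduct, dotProduct_smul, smul_eq_mul]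
    exact mul_ne_zero ht.ne' (dotp_self_pos hj).ne'
  rw [h, hstar] at hstu
  exact hstu.false

theorem zero_loss_matching_general {d r m : ℕ} (ws : Fin r → Fin d → ℝ) (W : Fin m → Fin d → ℝ)
    (hne : ∀ i, ws i ≠ 0)
    (hloss : loss ws W = 0) :
    ∀ j : Fin m, W j ≠ 0 →
      ∃ i : Fin r, ang (W j) (ws i) = 0 ∧ ∃ c : ℝ, W j = c • ws i := by
  intro j hj
  obtain ⟨i, c, hc⟩ :=
    exists_eq_smul_of_fStu_eq_fStar hne (fStu_eq_fStar_of_loss_eq_zero ws W hloss) hj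
  exact ⟨i, hc ▸ ang_smul_left_eq_zero (hc ▸ hj), c, hc⟩

/-- if the teacher neurons are nonzero and Δ-separated and the population
loss is zero, then every nonzero student neuron matches some teacher neuron in direction
(it is a (possibly negative) scalar multiple of a teacher neuron). -/
theorem zero_loss_matching {d r m : ℕ} (ws : Fin r → Fin d → ℝ) (W : Fin m → Fin d → ℝ)
    (Δ : ℝ) (hΔ : 0 < Δ)
    (hne : ∀ i, ws i ≠ 0)
    (hsep : ∀ i j : Fin r, i ≠ j → Δ ≤ ang (ws i) (ws j))
    (hloss : loss ws W = 0) :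
    ∀ j : Fin m, W j ≠ 0 →
      ∃ i : Fin r, ang (W j) (ws i) = 0 ∧ ∃ c : ℝ, W j = c • ws i :=
  zero_loss_matching_general ws W hne hloss
end
end

section
/- For every d, r ≥ 1, m ≥ 1, every teacher neurons w_1*, …, w_r* ∈ ℝ^d, every α ≥ 0, and every student W satisfying the sign convention ⟨w_j, w_i*⟩ ≥ 0 for all i ∈ [r], j ∈ T_i: if ‖v_i‖ ≤ α for all i ∈ [r], where v_i = Σ_{j ∈ T_i} ‖w_j‖ w_j − w_i*, then for every x ∈ ℝ^d one has |R_1(x)| ≤ r · α · ‖x‖ and R_2(x) ≥ 0, where R_1(x) = Σ_{i=1}^r ⟨v_i, x⟩ sgn(⟨w_i*, x⟩) and R_2(x) = Σ_{i=1}^r Σ_{j ∈ T_i} ‖w_j‖ ⟨w_j, x⟩ (sgn(⟨w_j, x⟩) − sgn(⟨w_i*, x⟩)). Moreover R_1(x) + R_2(x) = f_W(x) − f*(x) for all x. -/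
open MeasureTheory ProbabilityTheory Finset
open scoped Classical

noncomputable section

/-!
Writing `sᵢ = sgn ⟨wᵢ*, x⟩`, the term `R₁` equals `∑ⱼ ‖wⱼ‖ ⟨wⱼ, x⟩ s_{P j} - f*(x)`, because
`⟨wᵢ*, x⟩ sᵢ = |⟨wᵢ*, x⟩|`, while `R₂ = f_W(x) - ∑ⱼ ‖wⱼ‖ ⟨wⱼ, x⟩ s_{P j}`; the two add up to the
residual. The bound on `R₁` is Cauchy–Schwarz, and `R₂ ≥ 0` termwise because
`t (sgn t - s) = |t| - t s ≥ 0` whenever `|s| ≤ 1`.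
-/

namespace Real

lemma mul_sign_self (t : ℝ) : t * sign t = |t| := by
  rcases lt_trichotomy t 0 with h | rfl | h
  · rw [sign_of_neg h, abs_of_neg h]; ring
  · simp
  · rw [sign_of_pos h, abs_of_pos h]; ring

lemma abs_sign_le_one (t : ℝ) : |sign t| ≤ 1 := by
  rcases sign_apply_eq t with h | h | h <;> simp [h]

lemma mul_sign_sub_nonneg (t : ℝ) {s : ℝ} (hs : |s| ≤ 1) : 0 ≤ t * (sign t - s) := by
  have hts : t * s ≤ |t| :=
    calc t * s ≤ |t| * |s| := by rw [← abs_mul]; exact le_abs_self _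
      _ ≤ |t| := mul_le_of_le_one_right (abs_nonneg t) hs
  rw [mul_sub, mul_sign_self]
  linarith

end Real

lemma nrm_nonneg {d : ℕ} (w : Fin d → ℝ) : 0 ≤ nrm w := Real.sqrt_nonneg _

lemma abs_dotp_le_nrm_mul_nrm {d : ℕ} (v x : Fin d → ℝ) : |dotp v x| ≤ nrm v * nrm x := by
  have h := abs_real_inner_le_norm (WithLp.toLp 2 v : EuclideanSpace ℝ (Fin d)) (WithLp.toLp 2 x)
  simp only [PiLp.inner_apply, RCLike.inner_apply, starRingEnd_apply, star_trivial,
    EuclideanSpace.norm_eq] at h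
  simpa [dotp, nrm, sq, mul_comm] using h

lemma dotp_eq_sum_sub {d : ℕ} {ι : Type*} {s : Finset ι} {a : ι → ℝ} {u : ι → Fin d → ℝ}
    {w v : Fin d → ℝ} (hv : ∀ k, v k = (∑ j ∈ s, a j * u j k) - w k) (x : Fin d → ℝ) :
    dotp v x = (∑ j ∈ s, a j * dotp (u j) x) - dotp w x := by
  simp only [dotp, hv, sub_mul, sum_sub_distrib, sum_mul, mul_sum]
  rw [sum_comm]
  simp only [mul_assoc]

lemma abs_sum_dotp_mul_le {d : ℕ} {ι : Type*} [Fintype ι] {v : ι → Fin d → ℝ} {α : ℝ}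
    (hv : ∀ i, nrm (v i) ≤ α) {c : ι → ℝ} (hc : ∀ i, |c i| ≤ 1) (x : Fin d → ℝ) :
    |∑ i, dotp (v i) x * c i| ≤ Fintype.card ι * α * nrm x := by
  calc |∑ i, dotp (v i) x * c i| ≤ ∑ i, |dotp (v i) x| * |c i| := by
        simpa only [abs_mul] using abs_sum_le_sum_abs (fun i => dotp (v i) x * c i) univ
    _ ≤ ∑ _i : ι, α * nrm x := by
        refine sum_le_sum fun i _ => ?_
        calc |dotp (v i) x| * |c i| ≤ |dotp (v i) x| :=
              mul_le_of_le_one_right (abs_nonneg _) (hc i)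
          _ ≤ nrm (v i) * nrm x := abs_dotp_le_nrm_mul_nrm _ _
          _ ≤ α * nrm x := mul_le_mul_of_nonneg_right (hv i) (nrm_nonneg x)
    _ = Fintype.card ι * α * nrm x := by rw [sum_const, card_univ, nsmul_eq_mul, mul_assoc]

lemma sum_fiberwise_mul {ι κ R : Type*} [Fintype ι] [Fintype κ] [DecidableEq κ]
    [NonUnitalNonAssocSemiring R] (P : ι → κ) (a : ι → R) (b : κ → R) :
    ∑ i, (∑ j ∈ univ.filter (fun j => P j = i), a j) * b i = ∑ j, a j * b (P j) := by
  rw [← sum_fiberwise univ P fun j => a j * b (P j)]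
  refine sum_congr rfl fun i _ => ?_
  rw [sum_mul]
  exact sum_congr rfl fun j hj => by rw [(mem_filter.mp hj).2]

theorem residual_decomposition_general {d r m : ℕ}
    (ws : Fin r → Fin d → ℝ) (W : Fin m → Fin d → ℝ) (P : Fin m → Fin r)
    (α : ℝ)
    (v : Fin r → Fin d → ℝ)
    (hvdef : ∀ (i : Fin r) (k : Fin d),
      v i k = (∑ j ∈ Finset.univ.filter (fun j => P j = i), nrm (W j) * W j k) - ws i k)
    (hv : ∀ i : Fin r, nrm (v i) ≤ α) :
    ∀ x : Fin d → ℝ,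
      |∑ i, dotp (v i) x * Real.sign (dotp (ws i) x)| ≤ r * α * nrm x ∧
      0 ≤ ∑ j, nrm (W j) * dotp (W j) x *
            (Real.sign (dotp (W j) x) - Real.sign (dotp (ws (P j)) x)) ∧
      (∑ i, dotp (v i) x * Real.sign (dotp (ws i) x)) +
        (∑ j, nrm (W j) * dotp (W j) x *
          (Real.sign (dotp (W j) x) - Real.sign (dotp (ws (P j)) x))) =
        fStu W x - fStar ws x := by
  intro x
  set s : Fin r → ℝ := fun i => Real.sign (dotp (ws i) x)
  have hR₁ : ∑ i, dotp (v i) x * s i =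
      (∑ j, nrm (W j) * dotp (W j) x * s (P j)) - fStar ws x := by
    simp only [dotp_eq_sum_sub (hvdef _) x, sub_mul, sum_sub_distrib, sum_fiberwise_mul]
    simp only [s, Real.mul_sign_self, fStar]
  have hR₂ : ∑ j, nrm (W j) * dotp (W j) x * (Real.sign (dotp (W j) x) - s (P j)) =
      fStu W x - ∑ j, nrm (W j) * dotp (W j) x * s (P j) := by
    simp only [fStu, ← sum_sub_distrib, mul_sub, mul_assoc, Real.mul_sign_self]
  refine ⟨?_, ?_, by rw [hR₁, hR₂]; ring⟩
  · simpa using abs_sum_dotp_mul_le hv (fun i => Real.abs_sign_le_one _) x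
  · refine sum_nonneg fun j _ => ?_
    rw [mul_assoc]
    exact mul_nonneg (nrm_nonneg _) (Real.mul_sign_sub_nonneg _ (Real.abs_sign_le_one _))

/-- Property of the residual, Lemma B.2: under the sign convention, if
each average-neuron error `v_i = ∑_{j ∈ T_i} ‖w_j‖ w_j - w_i*` has `‖v_i‖ ≤ α`, then
pointwise `|R₁(x)| ≤ r α ‖x‖`, `R₂(x) ≥ 0`, and `R₁ + R₂` equals the residual. -/
theorem residual_decomposition {d r m : ℕ} (hr : 1 ≤ r) (hm : 1 ≤ m)
    (ws : Fin r → Fin d → ℝ) (W : Fin m → Fin d → ℝ) (P : Fin m → Fin r)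
    (hP : ∀ (j : Fin m) (k : Fin r), ang (W j) (ws (P j)) ≤ ang (W j) (ws k))
    (hsign : ∀ j : Fin m, 0 ≤ dotp (W j) (ws (P j)))
    (α : ℝ) (hα : 0 ≤ α)
    (v : Fin r → Fin d → ℝ)
    (hvdef : ∀ (i : Fin r) (k : Fin d),
      v i k = (∑ j ∈ Finset.univ.filter (fun j => P j = i), nrm (W j) * W j k) - ws i k)
    (hv : ∀ i : Fin r, nrm (v i) ≤ α) :
    ∀ x : Fin d → ℝ,
      |∑ i, dotp (v i) x * Real.sign (dotp (ws i) x)| ≤ r * α * nrm x ∧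
      0 ≤ ∑ j, nrm (W j) * dotp (W j) x *
            (Real.sign (dotp (W j) x) - Real.sign (dotp (ws (P j)) x)) ∧
      (∑ i, dotp (v i) x * Real.sign (dotp (ws i) x)) +
        (∑ j, nrm (W j) * dotp (W j) x *
          (Real.sign (dotp (W j) x) - Real.sign (dotp (ws (P j)) x))) =
        fStu W x - fStar ws x :=
  residual_decomposition_general ws W P α v hvdef hv
end
end
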